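/- arXiv:2509.07227 — 3 statements merged into one kernel-verified Lean document; each statement's English description precedes it below -/
import Mathlib

section
/- Let f : 𝕋 → ℝ be a periodic function with zero mean such that f ∈ L^∞(𝕋) and f'' ∈ L²(𝕋). Then ‖f‖_{L⁴(𝕋)} ≤ √3 · ‖f‖_{L^∞}^{1/2} ‖f''‖_{L²}^{1/2}. -/
open Real

open MeasureTheory Set intervalIntegral Function

noncomputable section

lemma two_pi_pos' : (0:ℝ) < 2 * π := by positivity

lemma lift_cont (g : ℝ → ℂ) (hg : Function.Periodic g (2*π)) (hc : Continuous g) :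
    Continuous hg.lift := by apply hc.quotient_liftOn'

lemma coeff_bridge (g : ℝ → ℂ) (hg : Function.Periodic g (2*π)) (n : ℤ) :
    haveI : Fact (0 < 2 * π) := ⟨two_pi_pos'⟩
    fourierCoeff hg.lift n = fourierCoeffOn two_pi_pos' g n := by
  haveI : Fact (0 < 2 * π) := ⟨two_pi_pos'⟩
  rw [fourierCoeff_eq_intervalIntegral _ n 0, fourierCoeffOn_eq_integral]
  simp only [zero_add, sub_zero, Function.Periodic.lift_coe, fourier_coe_apply]

lemma parseval' (g : ℝ → ℂ) (hg : Function.Periodic g (2*π)) (hc : Continuous g) :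
    Summable (fun n : ℤ => ‖fourierCoeffOn two_pi_pos' g n‖^2) ∧
    ∑' n : ℤ, ‖fourierCoeffOn two_pi_pos' g n‖^2
      = (1/(2*π)) * ∫ x in (0:ℝ)..(2*π), ‖g x‖^2 := by
  haveI : Fact (0 < 2 * π) := ⟨two_pi_pos'⟩
  set G : C(AddCircle (2*π), ℂ) := ⟨hg.lift, lift_cont g hg hc⟩ with hG

  set Gp := ContinuousMap.toLp (E := ℂ) 2 (@AddCircle.haarAddCircle (2*π) _) ℂ G with hGL'
  have hcoeff : ∀ n, fourierCoeff Gp n = fourierCoeffOn two_pi_pos' g n := by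
    intro n
    rw [fourierCoeff_toLp]
    exact coeff_bridge g hg n
  constructor
  · -- summability
    have hm := lp.memℓp ((@fourierBasis (2*π) _).repr Gp)
    have hs := hm.summable (by norm_num : (0:ℝ) < (2 : ENNReal).toReal)
    have : ∀ n : ℤ, ‖(@fourierBasis (2*π) _).repr Gp n‖ ^ (2 : ENNReal).toReal
        = ‖fourierCoeffOn two_pi_pos' g n‖ ^ 2 := by
      intro n
      rw [fourierBasis_repr, hcoeff n]
      norm_num [Real.rpow_natCast]
    exact (summable_congr (fun n => (this n))).mp hs
  · have hpar := tsum_sq_fourierCoeff Gp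
    simp_rw [hcoeff] at hpar
    rw [hpar]
    -- ∫ ‖Gp t‖^2 ∂haar = (1/(2π)) ∫ 0..2π ‖g x‖^2
    have hae : ∀ᵐ t ∂(@AddCircle.haarAddCircle (2*π) _), ‖Gp t‖^2 = ‖G t‖^2 := by
      filter_upwards [ContinuousMap.coeFn_toLp (E := ℂ) (p := 2) (μ := (@AddCircle.haarAddCircle (2*π) _)) (𝕜 := ℂ) G] with t ht
      rw [ht]
    rw [integral_congr_ae hae]
    have h1 : ∫ t, ‖G t‖^2 ∂(@AddCircle.haarAddCircle (2*π) _)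
        = (1/(2*π)) * ∫ t : AddCircle (2*π), ‖G t‖^2 := by
      rw [AddCircle.volume_eq_smul_haarAddCircle, MeasureTheory.integral_smul_measure]
      rw [ENNReal.toReal_ofReal two_pi_pos'.le]
      field_simp
      simp only [smul_eq_mul]; ring
    rw [h1]
    congr 1
    rw [← AddCircle.intervalIntegral_preimage (2*π) 0 (fun t => ‖G t‖^2), zero_add]
    apply intervalIntegral.integral_congr
    intro x _
    simp [hG, Function.Periodic.lift_coe]

lemma coeff_step (g g' : ℝ → ℂ) (hpg : g (2*π) = g 0)
    (hd : ∀ x, HasDerivAt g (g' x) x)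
    (hint : IntervalIntegrable g' MeasureTheory.volume 0 (2*π)) (n : ℤ) (hn : n ≠ 0) :
    ‖fourierCoeffOn two_pi_pos' g n‖ ≤ ‖fourierCoeffOn two_pi_pos' g' n‖ := by
  rw [fourierCoeffOn_of_hasDerivAt two_pi_pos' hn (fun x _ => hd x) hint]
  rw [hpg, sub_self, mul_zero, zero_sub, norm_mul, norm_neg, norm_mul]
  have h1 : ‖(1:ℂ) / (-2 * ↑π * Complex.I * ↑n)‖ = 1 / (2*π*|(n:ℝ)|) := by
    simp [norm_div, norm_mul, Complex.norm_I, abs_of_pos Real.pi_pos]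
  have h2 : ‖((2*π:ℝ):ℂ) - ((0:ℝ):ℂ)‖ = 2*π := by
    rw [← Complex.ofReal_sub]
    simp [Complex.norm_real, abs_of_pos Real.pi_pos]
  rw [h1, h2]
  have hn1 : (1:ℝ) ≤ |(n:ℝ)| := by
    rw [← Int.cast_abs]; exact_mod_cast Int.one_le_abs hn
  have hpos : (0:ℝ) < 2*π*|(n:ℝ)| := by positivity
  rw [div_mul_eq_mul_div, one_mul, div_le_iff₀ hpos]
  have hz := norm_nonneg (fourierCoeffOn two_pi_pos' g' n)
  nlinarith [Real.pi_pos, mul_le_mul_of_nonneg_left hn1 (mul_nonneg (by positivity : (0:ℝ) ≤ 2*π) hz)]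

lemma coeff_zero (g : ℝ → ℝ) (hmean : ∫ x in (0:ℝ)..(2*π), g x = 0) :
    fourierCoeffOn two_pi_pos' (fun x => (g x : ℂ)) 0 = 0 := by
  rw [fourierCoeffOn_eq_integral]
  simp only [neg_zero, fourier_zero, one_smul, intervalIntegral.integral_ofReal, hmean]
  simp

/-- If `f : 𝕋 → ℝ` is periodic with zero mean, `f ∈ L^∞` and `f'' ∈ L²`, then
`‖f‖_{L⁴} ≤ √3 ‖f‖_{L^∞}^{1/2} ‖f''‖_{L²}^{1/2}`. -/
theorem stmt7 (f : ℝ → ℝ) (hper : Function.Periodic f (2 * π))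
    (hf : ContDiff ℝ 2 f) (hmean : ∫ x in (0 : ℝ)..(2 * π), f x = 0) :
    (∫ x in (0 : ℝ)..(2 * π), |f x| ^ 4) ^ ((1 : ℝ) / 4)
      ≤ Real.sqrt 3 * (sSup (Set.range fun x => |f x|)) ^ ((1 : ℝ) / 2)
        * (∫ x in (0 : ℝ)..(2 * π), (deriv (deriv f) x) ^ 2) ^ ((1 : ℝ) / 4) := by
  haveI : Fact (0 < 2 * π) := ⟨two_pi_pos'⟩
  have hfc : Continuous f := hf.continuous
  have hsplit : Differentiable ℝ f ∧ Differentiable ℝ (deriv f)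
      ∧ Continuous (deriv (deriv f)) := by
    have h2 : ContDiff ℝ (1 + 1 : WithTop ℕ∞) f := by norm_num; exact hf
    obtain ⟨hd, -, h1⟩ := contDiff_succ_iff_deriv.mp h2
    obtain ⟨hd1, hc2⟩ := contDiff_one_iff_deriv.mp h1
    exact ⟨hd, hd1, hc2⟩
  obtain ⟨hdf, hdf1, hc2⟩ := hsplit
  have hc1 : Continuous (deriv f) := hdf1.continuous
  -- periodicity of derivatives
  have hperd : ∀ (g : ℝ → ℝ), Function.Periodic g (2*π) →
      Function.Periodic (deriv g) (2*π) := by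
    intro g hg x
    have hfun : (fun y => g (y + 2*π)) = g := funext hg
    rw [show deriv g (x + 2*π) = deriv (fun y => g (y + 2*π)) x from
      (deriv_comp_add_const g (2*π) x).symm, hfun]
  have hper1 : Function.Periodic (deriv f) (2*π) := hperd f hper
  have hper2 : Function.Periodic (deriv (deriv f)) (2*π) := hperd _ hper1
  -- complex lifts
  set F : ℝ → ℂ := fun x => (f x : ℂ) with hF
  set F1 : ℝ → ℂ := fun x => ((deriv f x : ℝ) : ℂ) with hF1
  set F2 : ℝ → ℂ := fun x => ((deriv (deriv f) x : ℝ) : ℂ) with hF2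
  have hFper : Function.Periodic F (2*π) := fun x => by simp [hF, hper x]
  have hF1per : Function.Periodic F1 (2*π) := fun x => by simp [hF1, hper1 x]
  have hF2per : Function.Periodic F2 (2*π) := fun x => by simp [hF2, hper2 x]
  have hFc : Continuous F := Complex.continuous_ofReal.comp hfc
  have hF1c : Continuous F1 := Complex.continuous_ofReal.comp hc1
  have hF2c : Continuous F2 := Complex.continuous_ofReal.comp hc2
  have hdF : ∀ x, HasDerivAt F (F1 x) x := fun x =>
    ((hdf x).hasDerivAt).ofReal_comp
  have hdF1 : ∀ x, HasDerivAt F1 (F2 x) x := fun x =>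
    ((hdf1 x).hasDerivAt).ofReal_comp
  -- Parseval
  obtain ⟨s0, p0⟩ := parseval' F hFper hFc
  obtain ⟨s2, p2⟩ := parseval' F2 hF2per hF2c
  -- coefficient comparison
  have hcb : ∀ n : ℤ, ‖fourierCoeffOn two_pi_pos' F n‖^2
      ≤ ‖fourierCoeffOn two_pi_pos' F2 n‖^2 := by
    intro n
    by_cases hn : n = 0
    · subst hn
      rw [show fourierCoeffOn two_pi_pos' F 0 = 0 from coeff_zero f hmean]
      simpa using sq_nonneg ‖fourierCoeffOn two_pi_pos' F2 0‖
    · have step1 := coeff_step F F1 (by rw [show (2*π:ℝ) = 0 + 2*π by ring, hFper 0])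
        hdF (hF1c.intervalIntegrable _ _) n hn
      have step2 := coeff_step F1 F2 (by rw [show (2*π:ℝ) = 0 + 2*π by ring, hF1per 0])
        hdF1 (hF2c.intervalIntegrable _ _) n hn
      exact pow_le_pow_left₀ (norm_nonneg _) (step1.trans step2) 2
  have htsum := Summable.tsum_le_tsum hcb s0 s2
  rw [p0, p2] at htsum
  have hnormint : ∀ (g : ℝ → ℝ), (∫ x in (0:ℝ)..(2*π), ‖((g x : ℝ) : ℂ)‖^2)
      = ∫ x in (0:ℝ)..(2*π), (g x)^2 := fun g =>
    intervalIntegral.integral_congr (fun x _ => by simp [Complex.sq_norm, sq_abs])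
  rw [hnormint f, hnormint (fun x => deriv (deriv f) x)] at htsum
  set A := ∫ x in (0:ℝ)..(2*π), (f x)^2 with hA
  set C := ∫ x in (0:ℝ)..(2*π), (deriv (deriv f) x)^2 with hC
  have hAC : A ≤ C := by
    have hpos : (0:ℝ) < 1/(2*π) := by positivity
    exact (mul_le_mul_iff_right₀ hpos).mp htsum
  -- sup bound
  set M := sSup (Set.range fun x => |f x|) with hM
  have hbdd : BddAbove (Set.range fun x => |f x|) := by
    have himg : (Set.range fun x => |f x|) ⊆ (fun x => |f x|) '' Set.Icc 0 (2*π) := by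
      rintro _ ⟨x, rfl⟩
      obtain ⟨y, hy, hxy⟩ := hper.exists_mem_Ico₀ two_pi_pos' x
      exact ⟨y, Set.Ico_subset_Icc_self hy, congrArg abs hxy.symm⟩
    exact (((isCompact_Icc).image (continuous_abs.comp hfc)).bddAbove).mono himg
  have hMx : ∀ x, |f x| ≤ M := fun x => le_csSup hbdd ⟨x, rfl⟩
  have hM0 : (0:ℝ) ≤ M := (abs_nonneg (f 0)).trans (hMx 0)
  have hC0 : (0:ℝ) ≤ C :=
    intervalIntegral.integral_nonneg two_pi_pos'.le (fun x _ => by positivity)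
  have hI40 : (0:ℝ) ≤ ∫ x in (0:ℝ)..(2*π), |f x|^4 :=
    intervalIntegral.integral_nonneg two_pi_pos'.le (fun x _ => by positivity)
  have h4 : (∫ x in (0:ℝ)..(2*π), |f x|^4) ≤ M^2 * A := by
    have hmono : (∫ x in (0:ℝ)..(2*π), |f x|^4)
        ≤ ∫ x in (0:ℝ)..(2*π), M^2 * (f x)^2 := by
      apply intervalIntegral.integral_mono_on two_pi_pos'.le
      · exact ((hfc.abs.pow 4)).intervalIntegrable _ _
      · exact ((continuous_const.mul (hfc.pow 2))).intervalIntegrable _ _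
      · intro x _
        have h := hMx x
        have habs : |f x|^4 = (f x)^2 * (f x)^2 := by rw [← sq_abs]; ring
        have hsq : (f x)^2 ≤ M^2 := by nlinarith [sq_abs (f x), abs_nonneg (f x)]
        calc |f x|^4 = (f x)^2 * (f x)^2 := habs
          _ ≤ M^2 * (f x)^2 := mul_le_mul_of_nonneg_right hsq (sq_nonneg _)
    rwa [intervalIntegral.integral_const_mul] at hmono
  have key : (∫ x in (0:ℝ)..(2*π), |f x|^4) ≤ M^2 * C :=
    h4.trans (mul_le_mul_of_nonneg_left hAC (by positivity))
  calc (∫ x in (0:ℝ)..(2*π), |f x|^4) ^ ((1:ℝ)/4)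
      ≤ (M^2 * C) ^ ((1:ℝ)/4) := Real.rpow_le_rpow hI40 key (by norm_num)
    _ = M ^ ((1:ℝ)/2) * C ^ ((1:ℝ)/4) := by
        rw [Real.mul_rpow (by positivity) hC0]
        congr 1
        rw [← Real.rpow_natCast M 2, ← Real.rpow_mul hM0]
        norm_num
    _ ≤ Real.sqrt 3 * M ^ ((1:ℝ)/2) * C ^ ((1:ℝ)/4) := by
        have h3 : (1:ℝ) ≤ Real.sqrt 3 := by
          rw [show (1:ℝ) = Real.sqrt 1 by simp]
          exact Real.sqrt_le_sqrt (by norm_num)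
        have hm := Real.rpow_nonneg hM0 ((1:ℝ)/2)
        have hc := Real.rpow_nonneg hC0 ((1:ℝ)/4)
        nlinarith [mul_le_mul_of_nonneg_right (mul_le_mul_of_nonneg_right h3 hm) hc]
end
end

section
/- Let E, D : [0,∞) → [0,∞) be C¹ and continuous respectively, with D ≥ 0, satisfying E'(t) + γD(t) ≤ C D(t) √(E(t)) for all t ≥ 0, where γ, C > 0. If E(0) < (γ/(2C))², then E(t) ≤ E(0) < (γ/(2C))² for all t ≥ 0, and E is non-increasing. -/
/-- energy bootstrap: if `E` is C¹, `D ≥ 0` continuous, and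
`E'(t) + γD(t) ≤ C D(t) √(E(t))` for `t ≥ 0` with `γ, C > 0`, and `E(0) < (γ/(2C))²`, then
`E(t) ≤ E(0) < (γ/(2C))²` for all `t ≥ 0` and `E` is non-increasing on `[0,∞)`. -/
theorem stmt13 (E D E' : ℝ → ℝ) (γ C : ℝ) (hγ : 0 < γ) (hC : 0 < C)
    (hE : ∀ t, 0 ≤ t → HasDerivAt E (E' t) t)
    (hEnn : ∀ t, 0 ≤ t → 0 ≤ E t)
    (hD : ContinuousOn D (Set.Ici 0)) (hDnn : ∀ t, 0 ≤ t → 0 ≤ D t)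
    (hineq : ∀ t, 0 ≤ t → E' t + γ * D t ≤ C * D t * Real.sqrt (E t))
    (h0 : E 0 < (γ / (2 * C)) ^ 2) :
    (∀ t, 0 ≤ t → E t ≤ E 0) ∧ AntitoneOn E (Set.Ici 0) := by
  set M := (γ / (2 * C)) ^ 2 with hM
  have hMpos : 0 < γ / (2 * C) := div_pos hγ (by positivity)
  have key : ∀ t, 0 ≤ t → E t < M → E' t ≤ 0 := by
    intro t ht hEt
    have hs : Real.sqrt (E t) < γ / (2 * C) := by
      have := Real.sqrt_lt_sqrt (hEnn t ht) hEt
      rwa [hM, Real.sqrt_sq hMpos.le] at this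
    have h1 := hineq t ht
    have hD0 := hDnn t ht
    have h2 : C * (γ / (2 * C)) = γ / 2 := by field_simp
    nlinarith [mul_nonneg hD0 (Real.sqrt_nonneg (E t)),
      mul_le_mul_of_nonneg_left hs.le hD0, mul_le_mul_of_nonneg_left
        (mul_le_mul_of_nonneg_left hs.le hD0) hC.le]
  have hcont : ContinuousOn E (Set.Ici 0) := fun t ht =>
    ((hE t ht).continuousAt).continuousWithinAt
  have hlt : ∀ t, 0 ≤ t → E t < M := by
    by_contra h
    push_neg at h
    obtain ⟨t0, ht0, hMt0⟩ := h
    set A := Set.Ici (0:ℝ) ∩ E ⁻¹' Set.Ici M with hA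
    have hAne : A.Nonempty := ⟨t0, ht0, hMt0⟩
    have hAbdd : BddBelow A := ⟨0, fun x hx => hx.1⟩
    have hAcl : IsClosed A :=
      hcont.preimage_isClosed_of_isClosed isClosed_Ici isClosed_Ici
    set s := sInf A with hsdef
    have hsA : s ∈ A := hAcl.csInf_mem hAne hAbdd
    have hs0 : 0 ≤ s := hsA.1
    have hsM : M ≤ E s := hsA.2
    have hltx : ∀ x, 0 ≤ x → x < s → E x < M := by
      intro x hx hxs
      by_contra hxM
      push_neg at hxM
      exact absurd (csInf_le hAbdd ⟨hx, hxM⟩) (not_le.mpr hxs)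
    have hanti : AntitoneOn E (Set.Icc 0 s) := by
      apply antitoneOn_of_deriv_nonpos (convex_Icc 0 s)
        (hcont.mono (fun x hx => hx.1))
      · intro x hx
        rw [interior_Icc] at hx
        exact ((hE x hx.1.le).differentiableAt).differentiableWithinAt
      · intro x hx
        rw [interior_Icc] at hx
        rw [(hE x hx.1.le).deriv]
        exact key x hx.1.le (hltx x hx.1.le hx.2)
    have : E s ≤ E 0 := hanti ⟨le_refl 0, hs0⟩ ⟨hs0, le_refl s⟩ hs0
    linarith
  have hanti : AntitoneOn E (Set.Ici 0) := by
    apply antitoneOn_of_deriv_nonpos (convex_Ici 0) hcont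
    · intro x hx
      rw [interior_Ici] at hx
      exact ((hE x hx.le).differentiableAt).differentiableWithinAt
    · intro x hx
      rw [interior_Ici] at hx
      rw [(hE x hx.le).deriv]
      exact key x hx.le (hlt x hx.le)
  exact ⟨fun t ht => hanti (Set.self_mem_Ici) ht ht, hanti⟩
end

section
/- For the linearized biofilm equation ĥ_t(1 + c³K/R₀ α²) = (c³K/(2R₀))α² ĥ − δ²c²α² ĥ with plane-wave solutions ĥ = e^{iαx + βt}, the growth rate is β = ((c³K/(2R₀))α² − δ²c²α²)/(1 + (c³K/R₀)α²); in particular if δ = 0 then β > 0 for every α ≠ 0 and every c > 0 (constant profiles are unstable), while if δ² > c K/(2R₀) then β < 0 for all α ≠ 0 (stability). -/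
theorem stmt15_general (K R₀ c δ a : ℝ) (hK : 0 < K) (hR₀ : 0 < R₀) (hc : 0 < c) :
    ((((c ^ 3 * K / (2 * R₀)) * a ^ 2 - δ ^ 2 * c ^ 2 * a ^ 2) / (1 + (c ^ 3 * K / R₀) * a ^ 2))
        * (1 + (c ^ 3 * K / R₀) * a ^ 2)
      = (c ^ 3 * K / (2 * R₀)) * a ^ 2 - δ ^ 2 * c ^ 2 * a ^ 2)
    ∧ (δ = 0 → a ≠ 0 →
        0 < ((c ^ 3 * K / (2 * R₀)) * a ^ 2 - δ ^ 2 * c ^ 2 * a ^ 2)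
              / (1 + (c ^ 3 * K / R₀) * a ^ 2))
    ∧ (δ ^ 2 > c * K / (2 * R₀) → a ≠ 0 →
        ((c ^ 3 * K / (2 * R₀)) * a ^ 2 - δ ^ 2 * c ^ 2 * a ^ 2)
              / (1 + (c ^ 3 * K / R₀) * a ^ 2) < 0) := by
  have hden : 0 < 1 + (c ^ 3 * K / R₀) * a ^ 2 := by positivity
  have hnum : (c ^ 3 * K / (2 * R₀)) * a ^ 2 - δ ^ 2 * c ^ 2 * a ^ 2
      = (c * a) ^ 2 * (c * K / (2 * R₀) - δ ^ 2) := by ring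
  refine ⟨div_mul_cancel₀ _ hden.ne', fun hδ ha => ?_, fun hgt ha => ?_⟩
  all_goals
    have hca : 0 < (c * a) ^ 2 := by positivity
    rw [hnum]
  · subst hδ
    have hgap : 0 < c * K / (2 * R₀) - 0 ^ 2 := by
      rw [sq, mul_zero, sub_zero]; positivity
    exact div_pos (mul_pos hca hgap) hden
  · have hgap : c * K / (2 * R₀) - δ ^ 2 < 0 := sub_neg.mpr hgt
    exact div_neg_of_neg_of_pos (mul_neg_of_pos_of_neg hca hgap) hden

/-- For the linearized biofilm equation with plane waves `e^{iax+βt}`, the growth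
rate is `β = ((c³K/(2R₀))a² − δ²c²a²)/(1 + (c³K/R₀)a²)`; if `δ = 0` then `β > 0` for every
`a ≠ 0` (instability of constants), while if `δ² > cK/(2R₀)` then `β < 0` for all `a ≠ 0`. -/
theorem stmt15 (K R₀ c δ a : ℝ) (hK : 0 < K) (hR₀ : 0 < R₀) (hc : 0 < c) (hδ : 0 ≤ δ) :
    ((((c ^ 3 * K / (2 * R₀)) * a ^ 2 - δ ^ 2 * c ^ 2 * a ^ 2) / (1 + (c ^ 3 * K / R₀) * a ^ 2))
        * (1 + (c ^ 3 * K / R₀) * a ^ 2)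
      = (c ^ 3 * K / (2 * R₀)) * a ^ 2 - δ ^ 2 * c ^ 2 * a ^ 2)
    ∧ (δ = 0 → a ≠ 0 →
        0 < ((c ^ 3 * K / (2 * R₀)) * a ^ 2 - δ ^ 2 * c ^ 2 * a ^ 2)
              / (1 + (c ^ 3 * K / R₀) * a ^ 2))
    ∧ (δ ^ 2 > c * K / (2 * R₀) → a ≠ 0 →
        ((c ^ 3 * K / (2 * R₀)) * a ^ 2 - δ ^ 2 * c ^ 2 * a ^ 2)
              / (1 + (c ^ 3 * K / R₀) * a ^ 2) < 0) :=
  stmt15_general K R₀ c δ a hK hR₀ hc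
end
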